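/- arXiv:2510.01933 — 10 statements merged into one kernel-verified Lean document; each statement's English description precedes it below -/
import Mathlib

section
/- Let g_1, …, g_m : ℝ^n → ℝ be continuous convex functions such that the set K = {x ∈ ℝ^n : g_i(x) ≤ 0 for all i} is compact and the set S = {x ∈ ℝ^n : g_i(x) < 0 for all i} is nonempty. Then for every c ∈ ℝ^n and every μ > 0 there exists x̂ ∈ S such that for all x ∈ S, c·x + μ·∑_{i=1}^m ln(−g_i(x)) ≤ c·x̂ + μ·∑_{i=1}^m ln(−g_i(x̂)); that is, the logarithmic barrier problem attains its maximum. -/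
open Matrix Finset

/-!
Up to the factor `μ`, the barrier objective is `log G` for the continuous function
`G x = exp (c ⬝ᵥ x / μ) * ∏ i, -g i x`, which is nonnegative on the compact set `K`, positive on
`S` and zero on `K \ S`. A maximiser of `G` on `K` therefore lies in `S` and maximises the
barrier objective there.
-/

namespace Real

theorem log_exp_mul_prod {ι : Type*} (a : ℝ) (s : Finset ι) {u : ι → ℝ}
    (hu : ∀ i ∈ s, 0 < u i) :
    log (exp a * ∏ i ∈ s, u i) = a + ∑ i ∈ s, log (u i) := by
  rw [log_mul (exp_ne_zero a) (prod_pos hu).ne', log_exp,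
    log_prod fun i hi => (hu i hi).ne']

end Real

section LogBarrier

variable {X ι : Type*} [Fintype ι] {g : ι → X → ℝ} {x : X}

theorem forall_neg_of_prod_neg_pos (hx : ∀ i, g i x ≤ 0) (hprod : 0 < ∏ i, -g i x) :
    ∀ i, g i x < 0 := by
  intro i
  refine (hx i).lt_of_ne fun hi => hprod.ne' ?_
  exact prod_eq_zero (mem_univ i) (by rw [hi, neg_zero])

variable [TopologicalSpace X]

theorem exists_isMaxOn_add_sum_log_neg {f : X → ℝ} (hf : Continuous f)
    (hg : ∀ i, Continuous (g i)) (hK : IsCompact {x | ∀ i, g i x ≤ 0})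
    (hS : {x | ∀ i, g i x < 0}.Nonempty) :
    ∃ xmax ∈ {x | ∀ i, g i x < 0},
      IsMaxOn (fun x => f x + ∑ i, Real.log (-g i x)) {x | ∀ i, g i x < 0} xmax := by
  set G : X → ℝ := fun x => Real.exp (f x) * ∏ i, -g i x
  have hG_pos : ∀ x ∈ {x | ∀ i, g i x < 0}, 0 < G x := fun x hx =>
    mul_pos (Real.exp_pos _) (prod_pos fun i _ => neg_pos.mpr (hx i))
  have hG_log : ∀ x ∈ {x | ∀ i, g i x < 0}, f x + ∑ i, Real.log (-g i x) = Real.log (G x) :=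
    fun x hx => (Real.log_exp_mul_prod _ _ fun i _ => neg_pos.mpr (hx i)).symm
  have hG_cont : Continuous G :=
    hf.rexp.mul (continuous_finsetProd _ fun i _ => (hg i).neg)
  obtain ⟨x₀, hx₀⟩ := hS
  obtain ⟨xmax, hxmaxK, hmax⟩ :=
    hK.exists_isMaxOn ⟨x₀, fun i => (hx₀ i).le⟩ hG_cont.continuousOn
  have hGmax_pos : 0 < G xmax := (hG_pos x₀ hx₀).trans_le (hmax fun i => (hx₀ i).le)
  have hxmaxS : ∀ i, g i xmax < 0 :=
    forall_neg_of_prod_neg_pos hxmaxK (pos_of_mul_pos_right hGmax_pos (Real.exp_pos _).le)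
  refine ⟨xmax, hxmaxS, fun x hx => ?_⟩
  simp only [Set.mem_ofPred_eq, hG_log x hx, hG_log xmax hxmaxS]
  exact Real.log_le_log (hG_pos x hx) (hmax fun i => (hx i).le)

end LogBarrier

theorem barrier_max_attained_general {n m : ℕ}
    (g : Fin m → (Fin n → ℝ) → ℝ)
    (hcont : ∀ i, Continuous (g i))
    (hK : IsCompact {x : Fin n → ℝ | ∀ i, g i x ≤ 0})
    (hS : {x : Fin n → ℝ | ∀ i, g i x < 0}.Nonempty)
    (c : Fin n → ℝ) (μ : ℝ) (hμ : 0 < μ) :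
    ∃ xstar ∈ {x : Fin n → ℝ | ∀ i, g i x < 0},
      ∀ x ∈ {x : Fin n → ℝ | ∀ i, g i x < 0},
        c ⬝ᵥ x + μ * ∑ i, Real.log (-(g i x)) ≤
          c ⬝ᵥ xstar + μ * ∑ i, Real.log (-(g i xstar)) := by
  have hf : Continuous fun x : Fin n → ℝ => c ⬝ᵥ x / μ :=
    (continuous_const.dotProduct continuous_id).div_const μ
  obtain ⟨xstar, hxstar, hmax⟩ := exists_isMaxOn_add_sum_log_neg hf hcont hK hS
  refine ⟨xstar, hxstar, fun x hx => ?_⟩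
  have hscaled : ∀ y : Fin n → ℝ, c ⬝ᵥ y + μ * ∑ i, Real.log (-(g i y)) =
      μ * (c ⬝ᵥ y / μ + ∑ i, Real.log (-(g i y))) := fun y => by
    field_simp
  rw [hscaled x, hscaled xstar]
  exact mul_le_mul_of_nonneg_left (hmax hx) hμ.le

/-- The logarithmic barrier problem attains its maximum on the strict interior
    of a compact convex feasible region. -/
theorem barrier_max_attained {n m : ℕ}
    (g : Fin m → (Fin n → ℝ) → ℝ)
    (hcont : ∀ i, Continuous (g i))
    (hconv : ∀ i, ConvexOn ℝ Set.univ (g i))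
    (hK : IsCompact {x : Fin n → ℝ | ∀ i, g i x ≤ 0})
    (hS : {x : Fin n → ℝ | ∀ i, g i x < 0}.Nonempty)
    (c : Fin n → ℝ) (μ : ℝ) (hμ : 0 < μ) :
    ∃ xstar ∈ {x : Fin n → ℝ | ∀ i, g i x < 0},
      ∀ x ∈ {x : Fin n → ℝ | ∀ i, g i x < 0},
        c ⬝ᵥ x + μ * ∑ i, Real.log (-(g i x)) ≤
          c ⬝ᵥ xstar + μ * ∑ i, Real.log (-(g i xstar)) :=
  barrier_max_attained_general g hcont hK hS c μ hμ
end

section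
/- Let Q be an n×n real positive semidefinite symmetric matrix, let D be an m×m real positive definite symmetric matrix, and let B be an m×n real matrix with full column rank (rank B = n). Then the (n+m)×(n+m) block matrix [[Q, Bᵀ], [D B, −I]], where I is the m×m identity matrix, is nonsingular. -/
open Matrix

/-! Taking the Schur complement of the block `-1` gives
`det [[Q, Bᵀ], [D B, -1]] = ± det (Q + Bᵀ D B)`, and `Q + Bᵀ D B` is positive definite because
`B` is injective. -/

theorem Matrix.mulVec_injective_of_rank_eq_card {m n K : Type*} [Field K] [Fintype n]
    {A : Matrix m n K} (h : A.rank = Fintype.card n) : Function.Injective A.mulVec := by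
  rw [mulVec_injective_iff, linearIndependent_iff_card_eq_finrank_span, ← h,
    rank_eq_finrank_span_cols, Set.finrank]

theorem Matrix.det_fromBlocks_neg_one₂₂ {m n α : Type*} [Fintype m] [Fintype n] [DecidableEq m]
    [DecidableEq n] [CommRing α] (A : Matrix m m α) (B : Matrix m n α) (C : Matrix n m α) :
    (fromBlocks A B C (-1)).det = (-1) ^ Fintype.card n * det (A + B * C) := by
  have : Invertible (1 : Matrix n n α) := invertibleOne
  have := invertibleNeg (1 : Matrix n n α)
  rw [det_fromBlocks₂₂, invOf_neg, invOf_one, det_neg, det_one, mul_one, Matrix.mul_neg,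
    Matrix.mul_one, Matrix.neg_mul, sub_neg_eq_add]

/-- If `Q ⪰ 0` is symmetric, `D ≻ 0` is symmetric, and `B` has full column
    rank, then the block matrix `[[Q, Bᵀ], [D B, -I]]` is nonsingular. -/
theorem blockMatrix_nonsingular {n m : ℕ}
    (Q : Matrix (Fin n) (Fin n) ℝ)
    (D : Matrix (Fin m) (Fin m) ℝ)
    (B : Matrix (Fin m) (Fin n) ℝ)
    (hQ : Q.PosSemidef) (hD : D.PosDef) (hB : B.rank = n) :
    (Matrix.fromBlocks Q Bᵀ (D * B) (-(1 : Matrix (Fin m) (Fin m) ℝ))).det ≠ 0 := by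
  have hBinj : Function.Injective B.mulVec :=
    mulVec_injective_of_rank_eq_card (by rwa [Fintype.card_fin])
  have hSchur : (Q + Bᵀ * (D * B)).PosDef := by
    rw [← Matrix.mul_assoc, ← conjTranspose_eq_transpose_of_trivial]
    exact PosDef.posSemidef_add hQ (hD.conjTranspose_mul_mul_same hBinj)
  rw [det_fromBlocks_neg_one₂₂]
  exact mul_ne_zero (pow_ne_zero _ (by norm_num)) hSchur.det_pos.ne'
end

section
/- Let A be an m×n real matrix and b ∈ ℝ^m, c ∈ ℝ^n. Assume the set {x ∈ ℝ^n : A x ≤ b componentwise} is bounded, and assume there exists a triple (x̂, ŷ, ŝ) with A x̂ + ŝ = b, Aᵀŷ = c, ŝ > 0 and ŷ > 0 componentwise. Then for every M > 0 the set B = {(x, y, s) ∈ ℝ^n × ℝ^m × ℝ^m : A x + s = b, Aᵀ y = c, y > 0, s > 0, s·y ≤ M} is bounded. -/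
open Matrix Bornology

/-- If the primal feasible region is bounded and a strictly feasible
    primal-dual triple exists, then the set of feasible primal-dual triples
    with duality gap `s ⬝ y ≤ M` is bounded. -/
theorem dualityGap_levelSet_bounded {m n : ℕ}
    (A : Matrix (Fin m) (Fin n) ℝ) (b : Fin m → ℝ) (c : Fin n → ℝ)
    (hfeas : IsBounded {x : Fin n → ℝ | ∀ i, A.mulVec x i ≤ b i})
    (hstrict : ∃ (xhat : Fin n → ℝ) (yhat shat : Fin m → ℝ),
        A.mulVec xhat + shat = b ∧ Aᵀ.mulVec yhat = c ∧
        (∀ i, 0 < shat i) ∧ (∀ i, 0 < yhat i))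
    (M : ℝ) (hM : 0 < M) :
    IsBounded {p : (Fin n → ℝ) × (Fin m → ℝ) × (Fin m → ℝ) |
        A.mulVec p.1 + p.2.2 = b ∧ Aᵀ.mulVec p.2.1 = c ∧
        (∀ i, 0 < p.2.1 i) ∧ (∀ i, 0 < p.2.2 i) ∧ p.2.2 ⬝ᵥ p.2.1 ≤ M} := by
  obtain ⟨xh, yh, sh, hxh, hyh, hshpos, hyhpos⟩ := hstrict
  set K : ℝ := M + sh ⬝ᵥ yh with hKdef
  have hKpos : 0 < K := by
    have : (0:ℝ) ≤ sh ⬝ᵥ yh :=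
      Finset.sum_nonneg fun j _ => le_of_lt (mul_pos (hshpos j) (hyhpos j))
    linarith
  set ry : ℝ := ∑ j, K / sh j with hrydef
  set rs : ℝ := ∑ j, K / yh j with hrsdef
  have hrynn : 0 ≤ ry :=
    Finset.sum_nonneg fun j _ => le_of_lt (div_pos hKpos (hshpos j))
  have hrsnn : 0 ≤ rs :=
    Finset.sum_nonneg fun j _ => le_of_lt (div_pos hKpos (hyhpos j))
  apply IsBounded.subset
    (hfeas.prod ((Metric.isBounded_closedBall (x := (0 : Fin m → ℝ)) (r := ry)).prod
      (Metric.isBounded_closedBall (x := (0 : Fin m → ℝ)) (r := rs))))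
  rintro ⟨x, y, s⟩ ⟨h1, h2, hy, hs, hgap⟩
  -- key identity: (sh - s) ⬝ (y - yh) = 0
  have hd : sh - s = A.mulVec (x - xh) := by
    rw [Matrix.mulVec_sub]
    have e1 : A.mulVec xh = b - sh := by rw [← hxh]; ring
    have e2 : A.mulVec x = b - s := by rw [← h1]; ring
    rw [e1, e2]; ring
  have h0 : (y - yh) ⬝ᵥ (sh - s) = 0 := by
    rw [hd, dotProduct_mulVec, ← Matrix.mulVec_transpose, Matrix.mulVec_sub, h2, hyh,
      sub_self, zero_dotProduct]
  have hkey : sh ⬝ᵥ y + s ⬝ᵥ yh = s ⬝ᵥ y + sh ⬝ᵥ yh := by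
    have := h0
    simp only [dotProduct, Pi.sub_apply, sub_mul, mul_sub, Finset.sum_sub_distrib] at this ⊢
    have c1 : ∑ j, y j * sh j = ∑ j, sh j * y j := by
      exact Finset.sum_congr rfl fun j _ => mul_comm _ _
    have c2 : ∑ j, y j * s j = ∑ j, s j * y j := by
      exact Finset.sum_congr rfl fun j _ => mul_comm _ _
    have c3 : ∑ j, yh j * sh j = ∑ j, sh j * yh j := by
      exact Finset.sum_congr rfl fun j _ => mul_comm _ _
    have c4 : ∑ j, yh j * s j = ∑ j, s j * yh j := by
      exact Finset.sum_congr rfl fun j _ => mul_comm _ _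
    rw [c1, c2, c3, c4] at this
    linarith
  have hsyh : (0:ℝ) ≤ s ⬝ᵥ yh :=
    Finset.sum_nonneg fun j _ => le_of_lt (mul_pos (hs j) (hyhpos j))
  have hshy : (0:ℝ) ≤ sh ⬝ᵥ y :=
    Finset.sum_nonneg fun j _ => le_of_lt (mul_pos (hshpos j) (hy j))
  have hshyK : sh ⬝ᵥ y ≤ K := by rw [hKdef]; linarith
  have hsyhK : s ⬝ᵥ yh ≤ K := by rw [hKdef]; linarith
  refine ⟨?_, ?_, ?_⟩
  · intro i
    have : A.mulVec x i = b i - s i := by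
      have := congrFun h1 i
      simp at this
      linarith
    rw [this]
    linarith [hs i]
  · rw [Metric.mem_closedBall, dist_zero_right]
    rw [pi_norm_le_iff_of_nonneg hrynn]
    intro i
    rw [Real.norm_eq_abs, abs_of_pos (hy i)]
    have hterm : sh i * y i ≤ sh ⬝ᵥ y := by
      have := Finset.single_le_sum (f := fun j => sh j * y j)
        (fun j _ => le_of_lt (mul_pos (hshpos j) (hy j))) (Finset.mem_univ i)
      simpa [dotProduct] using this
    have hyi : y i ≤ K / sh i := by
      rw [le_div_iff₀ (hshpos i)]
      calc y i * sh i = sh i * y i := mul_comm _ _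
        _ ≤ sh ⬝ᵥ y := hterm
        _ ≤ K := hshyK
    refine hyi.trans ?_
    rw [hrydef]
    exact Finset.single_le_sum (f := fun j => K / sh j)
      (fun j _ => le_of_lt (div_pos hKpos (hshpos j))) (Finset.mem_univ i)
  · rw [Metric.mem_closedBall, dist_zero_right]
    rw [pi_norm_le_iff_of_nonneg hrsnn]
    intro i
    rw [Real.norm_eq_abs, abs_of_pos (hs i)]
    have hterm : s i * yh i ≤ s ⬝ᵥ yh := by
      have := Finset.single_le_sum (f := fun j => s j * yh j)
        (fun j _ => le_of_lt (mul_pos (hs j) (hyhpos j))) (Finset.mem_univ i)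
      simpa [dotProduct] using this
    have hsi : s i ≤ K / yh i := by
      rw [le_div_iff₀ (hyhpos i)]
      calc s i * yh i ≤ s ⬝ᵥ yh := hterm
        _ ≤ K := hsyhK
    refine hsi.trans ?_
    rw [hrsdef]
    exact Finset.single_le_sum (f := fun j => K / yh j)
      (fun j _ => le_of_lt (div_pos hKpos (hyhpos j))) (Finset.mem_univ i)
end

section
/- Let A be an m×n real matrix and b ∈ ℝ^m, c ∈ ℝ^n. Assume the set {x ∈ ℝ^n : A x ≤ b componentwise} is bounded, and assume there exists a triple (x̂, ŷ, ŝ) with A x̂ + ŝ = b, Aᵀŷ = c, ŝ > 0 and ŷ > 0 componentwise. Then for every μ₀ > 0 the set of triples (x, y, s) that satisfy the central path conditions with some parameter μ ∈ (0, μ₀] is bounded. -/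
open Matrix Bornology

/-- `(x, s, y)` satisfies the central path conditions with parameter `μ`
    for the data `(A, b, c)`. -/
def CentralPath {m n : ℕ} (A : Matrix (Fin m) (Fin n) ℝ)
    (b : Fin m → ℝ) (c : Fin n → ℝ) (μ : ℝ)
    (x : Fin n → ℝ) (s y : Fin m → ℝ) : Prop :=
  A.mulVec x + s = b ∧ Aᵀ.mulVec y = c ∧ (∀ i, s i * y i = μ) ∧
    (∀ i, 0 < s i) ∧ (∀ i, 0 < y i)

/-- If the primal feasible region is bounded and a strictly feasible
    primal-dual triple exists, then the set of central path triples with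
    parameter `μ ∈ (0, μ₀]` is bounded. -/
theorem centralPath_bounded {m n : ℕ}
    (A : Matrix (Fin m) (Fin n) ℝ) (b : Fin m → ℝ) (c : Fin n → ℝ)
    (hfeas : IsBounded {x : Fin n → ℝ | ∀ i, A.mulVec x i ≤ b i})
    (hstrict : ∃ (xhat : Fin n → ℝ) (yhat shat : Fin m → ℝ),
        A.mulVec xhat + shat = b ∧ Aᵀ.mulVec yhat = c ∧
        (∀ i, 0 < shat i) ∧ (∀ i, 0 < yhat i))
    (μ₀ : ℝ) (hμ₀ : 0 < μ₀) :
    IsBounded {p : (Fin n → ℝ) × (Fin m → ℝ) × (Fin m → ℝ) |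
        ∃ μ : ℝ, 0 < μ ∧ μ ≤ μ₀ ∧ CentralPath A b c μ p.1 p.2.2 p.2.1} := by
  obtain ⟨xh, yh, sh, hxh, hyh, hshpos, hyhpos⟩ := hstrict
  obtain ⟨R₀, hR₀⟩ := (isBounded_iff_forall_norm_le).1 hfeas
  set R₁ : ℝ := max R₀ 0 with hR₁def
  have hR₁ : (0:ℝ) ≤ R₁ := le_max_right _ _
  -- bound for x
  have hxbound : ∀ x : Fin n → ℝ, (∀ i, A.mulVec x i ≤ b i) → ‖x‖ ≤ R₁ :=
    fun x hx => le_trans (hR₀ x hx) (le_max_left _ _)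
  -- constants
  set K : ℝ := ∑ i : Fin m, ∑ j : Fin n, |A i j| with hKdef
  have hK : 0 ≤ K := Finset.sum_nonneg fun i _ =>
    Finset.sum_nonneg fun j _ => abs_nonneg _
  set C : ℝ := (∑ i : Fin m, sh i * yh i) + m * μ₀ with hCdef
  have hC : 0 ≤ C := by
    apply add_nonneg
    · exact Finset.sum_nonneg fun i _ => le_of_lt (mul_pos (hshpos i) (hyhpos i))
    · positivity
  set Ry : ℝ := ∑ i : Fin m, C / sh i with hRydef
  set Rs : ℝ := ‖b‖ + K * R₁ with hRsdef
  have hRs : 0 ≤ Rs := add_nonneg (norm_nonneg _) (mul_nonneg hK hR₁)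
  have hRy : 0 ≤ Ry := Finset.sum_nonneg fun i _ =>
    div_nonneg hC (le_of_lt (hshpos i))
  rw [isBounded_iff_forall_norm_le]
  refine ⟨max R₁ (max Ry Rs), ?_⟩
  rintro ⟨x, y, s⟩ ⟨μ, hμ, hμle, hAx, hAy, hsy, hs, hy⟩
  simp only at hAx hAy hsy hs hy ⊢
  -- x is feasible
  have hxfeas : ∀ i, A.mulVec x i ≤ b i := by
    intro i
    have := congrFun hAx i
    simp only [Pi.add_apply] at this
    linarith [hs i]
  have hxn : ‖x‖ ≤ R₁ := hxbound x hxfeas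
  -- bound on s
  have hsn : ‖s‖ ≤ Rs := by
    rw [pi_norm_le_iff_of_nonneg hRs]
    intro i
    have hsi : s i = b i - A.mulVec x i := by
      have := congrFun hAx i
      simp only [Pi.add_apply] at this
      linarith
    have hAxi : |A.mulVec x i| ≤ K * R₁ := by
      calc |A.mulVec x i| = |∑ j, A i j * x j| := rfl
        _ ≤ ∑ j, |A i j * x j| := Finset.abs_sum_le_sum_abs _ _
        _ ≤ ∑ j, |A i j| * R₁ := by
            refine Finset.sum_le_sum fun j _ => ?_
            rw [abs_mul]
            exact mul_le_mul_of_nonneg_left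
              (le_trans (norm_le_pi_norm x j) hxn) (abs_nonneg _)
        _ = (∑ j, |A i j|) * R₁ := (Finset.sum_mul _ _ _).symm
        _ ≤ K * R₁ := by
            apply mul_le_mul_of_nonneg_right _ hR₁
            exact Finset.single_le_sum
              (f := fun i => ∑ j, |A i j|)
              (fun i _ => Finset.sum_nonneg fun j _ => abs_nonneg _)
              (Finset.mem_univ i)
    rw [Real.norm_eq_abs, hsi]
    calc |b i - A.mulVec x i| ≤ |b i| + |A.mulVec x i| := abs_sub _ _
      _ ≤ ‖b‖ + K * R₁ := add_le_add (norm_le_pi_norm b i) hAxi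
  -- key identity: (sh - s) ⬝ᵥ (yh - y) = 0
  have hkey : (sh - s) ⬝ᵥ (yh - y) = 0 := by
    have h1 : sh - s = A.mulVec (x - xh) := by
      have := congrFun hxh
      funext i
      have h1 := congrFun hxh i
      have h2 := congrFun hAx i
      simp only [Pi.add_apply] at h1 h2
      simp only [Pi.sub_apply, Matrix.mulVec_sub]
      linarith
    have h2 : Aᵀ.mulVec (yh - y) = 0 := by
      rw [Matrix.mulVec_sub, hyh, hAy, sub_self]
    rw [h1, dotProduct_comm, Matrix.dotProduct_mulVec,
      ← Matrix.mulVec_transpose, h2, zero_dotProduct]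
  -- derive sum bound
  have hsum : (∑ i, sh i * y i) + ∑ i, s i * yh i
      = (∑ i, sh i * yh i) + ∑ i, s i * y i := by
    have : (sh - s) ⬝ᵥ (yh - y)
        = (∑ i, sh i * yh i) + (∑ i, s i * y i)
          - ((∑ i, sh i * y i) + ∑ i, s i * yh i) := by
      simp only [dotProduct, Pi.sub_apply, ← Finset.sum_sub_distrib,
        ← Finset.sum_add_distrib]
      congr 1; funext i; ring
    rw [hkey] at this
    linarith
  have hsum2 : (∑ i, sh i * y i) ≤ C := by
    have h1 : (∑ i, s i * y i) = m * μ := by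
      simp only [hsy, Finset.sum_const, Finset.card_univ, Fintype.card_fin,
        nsmul_eq_mul]
    have h2 : (0:ℝ) ≤ ∑ i, s i * yh i :=
      Finset.sum_nonneg fun i _ => le_of_lt (mul_pos (hs i) (hyhpos i))
    have h3 : (m:ℝ) * μ ≤ m * μ₀ := by
      apply mul_le_mul_of_nonneg_left hμle (Nat.cast_nonneg m)
    rw [hCdef]
    linarith [hsum, h1]
  -- bound on y
  have hyn : ‖y‖ ≤ Ry := by
    rw [pi_norm_le_iff_of_nonneg hRy]
    intro i
    have h1 : sh i * y i ≤ ∑ j, sh j * y j :=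
      Finset.single_le_sum
        (f := fun j => sh j * y j)
        (fun j _ => le_of_lt (mul_pos (hshpos j) (hy j)))
        (Finset.mem_univ i)
    have h2 : y i ≤ C / sh i := by
      rw [le_div_iff₀ (hshpos i)]
      calc y i * sh i = sh i * y i := mul_comm _ _
        _ ≤ ∑ j, sh j * y j := h1
        _ ≤ C := hsum2
    rw [Real.norm_eq_abs, abs_of_pos (hy i)]
    calc y i ≤ C / sh i := h2
      _ ≤ Ry := Finset.single_le_sum
          (f := fun j => C / sh j)
          (fun j _ => div_nonneg hC (le_of_lt (hshpos j)))
          (Finset.mem_univ i)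
  -- assemble
  rw [Prod.norm_def, Prod.norm_def]
  apply max_le
  · exact le_trans hxn (le_max_left _ _)
  · apply max_le
    · exact le_trans hyn (le_trans (le_max_left _ _) (le_max_right _ _))
    · exact le_trans hsn (le_trans (le_max_right _ _) (le_max_right _ _))
end

section
/- Let A be an m×n real matrix, b ∈ ℝ^m, c ∈ ℝ^n and μ > 0. Suppose (x, s, y) satisfies the central path conditions with parameter μ, and suppose (x*, s*, y*) satisfies A x* + s* = b, Aᵀ y* = c, and s*·y* = 0. Then s*·y + s·y* = m·μ. -/
open Matrix

/-- If `(x, s, y)` is on the central path with parameter `μ` and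
    `(x*, s*, y*)` is a complementary primal-dual feasible triple, then
    `s* ⬝ y + s ⬝ y* = m * μ`. -/
theorem centralPath_gap_identity {m n : ℕ}
    (A : Matrix (Fin m) (Fin n) ℝ) (b : Fin m → ℝ) (c : Fin n → ℝ)
    (μ : ℝ) (hμ : 0 < μ)
    (x : Fin n → ℝ) (s y : Fin m → ℝ)
    (hcp : CentralPath A b c μ x s y)
    (xstar : Fin n → ℝ) (sstar ystar : Fin m → ℝ)
    (hp : A.mulVec xstar + sstar = b)
    (hd : Aᵀ.mulVec ystar = c)
    (hcomp : sstar ⬝ᵥ ystar = 0) :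
    sstar ⬝ᵥ y + s ⬝ᵥ ystar = m * μ := by
  obtain ⟨h1, h2, h3, _, _⟩ := hcp
  have hs : sstar - s = A.mulVec (x - xstar) := by
    have h := hp.trans h1.symm
    funext i
    have hi := congrFun h i
    simp only [Matrix.mulVec_sub, Pi.add_apply, Pi.sub_apply] at hi ⊢
    linarith
  have hAt : (y - ystar) ᵥ* A = 0 := by
    rw [← Matrix.mulVec_transpose, Matrix.mulVec_sub, h2, hd, sub_self]
  have key : (sstar - s) ⬝ᵥ (y - ystar) = 0 := by
    rw [hs, dotProduct_comm, Matrix.dotProduct_mulVec, hAt,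
      zero_dotProduct]
  have hsy : s ⬝ᵥ y = m * μ := by
    simp only [dotProduct]
    rw [Finset.sum_congr rfl fun i _ => h3 i]
    simp [mul_comm]
  have hexp : sstar ⬝ᵥ y - sstar ⬝ᵥ ystar - s ⬝ᵥ y + s ⬝ᵥ ystar = 0 := by
    have := key
    rw [sub_dotProduct, dotProduct_sub, dotProduct_sub] at this
    linarith
  linarith [hexp, hsy, hcomp]
end

section
/- Let A be an m×n real matrix, b ∈ ℝ^m, c ∈ ℝ^n. Let μ^k > 0 be a sequence with μ^k → 0, and let (x^k, s^k, y^k) satisfy the central path conditions with parameter μ^k for each k. Suppose (x^k, s^k, y^k) → (x*, s*, y*). Then A x* + s* = b, Aᵀ y* = c, s* ≥ 0, y* ≥ 0 and s*·y* = 0; consequently c·x ≤ c·x* for every (x, s) with A x + s = b and s ≥ 0, and b·y* ≤ b·y for every y ≥ 0 with Aᵀ y = c. That is, (x*, s*) solves the primal linear program max{c·x : Ax + s = b, s ≥ 0} and y* solves the dual linear program min{b·y : Aᵀy = c, y ≥ 0}. -/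
open Matrix Filter

/-- As `μ ↓ 0`, any limit of central path points is optimal for the primal
    linear program `max {c ⬝ x : A x + s = b, s ≥ 0}` and for the dual
    linear program `min {b ⬝ y : Aᵀ y = c, y ≥ 0}`. -/
theorem centralPath_limit_optimal {m n : ℕ}
    (A : Matrix (Fin m) (Fin n) ℝ) (b : Fin m → ℝ) (c : Fin n → ℝ)
    (μ : ℕ → ℝ) (hμpos : ∀ k, 0 < μ k) (hμ : Tendsto μ atTop (nhds 0))
    (x : ℕ → Fin n → ℝ) (s y : ℕ → Fin m → ℝ)
    (hcp : ∀ k, CentralPath A b c (μ k) (x k) (s k) (y k))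
    (xstar : Fin n → ℝ) (sstar ystar : Fin m → ℝ)
    (hlim : Tendsto (fun k => (x k, s k, y k)) atTop (nhds (xstar, sstar, ystar))) :
    A.mulVec xstar + sstar = b ∧
    Aᵀ.mulVec ystar = c ∧
    (∀ i, 0 ≤ sstar i) ∧
    (∀ i, 0 ≤ ystar i) ∧
    sstar ⬝ᵥ ystar = 0 ∧
    (∀ (x' : Fin n → ℝ) (s' : Fin m → ℝ), A.mulVec x' + s' = b →
        (∀ i, 0 ≤ s' i) → c ⬝ᵥ x' ≤ c ⬝ᵥ xstar) ∧
    (∀ y' : Fin m → ℝ, (∀ i, 0 ≤ y' i) → Aᵀ.mulVec y' = c →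
        b ⬝ᵥ ystar ≤ b ⬝ᵥ y') := by
  -- componentwise limits
  have hx : Tendsto x atTop (nhds xstar) := (continuous_fst.tendsto _).comp hlim
  have hs : Tendsto s atTop (nhds sstar) :=
    ((continuous_fst.comp continuous_snd).tendsto _).comp hlim
  have hy : Tendsto y atTop (nhds ystar) :=
    ((continuous_snd.comp continuous_snd).tendsto _).comp hlim
  have hxj : ∀ j, Tendsto (fun k => x k j) atTop (nhds (xstar j)) :=
    fun j => ((continuous_apply j).tendsto _).comp hx
  have hsi : ∀ i, Tendsto (fun k => s k i) atTop (nhds (sstar i)) :=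
    fun i => ((continuous_apply i).tendsto _).comp hs
  have hyi : ∀ i, Tendsto (fun k => y k i) atTop (nhds (ystar i)) :=
    fun i => ((continuous_apply i).tendsto _).comp hy
  have hfeas : A.mulVec xstar + sstar = b := by
    funext i
    have h1 : Tendsto (fun k => A.mulVec (x k) i + s k i)
        atTop (nhds (A.mulVec xstar i + sstar i)) := by
      refine Tendsto.add ?_ (hsi i)
      simp only [mulVec, dotProduct]
      exact tendsto_finset_sum _ fun j _ => tendsto_const_nhds.mul (hxj j)
    have h2 : ∀ k, A.mulVec (x k) i + s k i = b i := by
      intro k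
      have := congrFun (hcp k).1 i
      simpa using this
    exact tendsto_nhds_unique h1 (by simp only [h2]; exact tendsto_const_nhds)
  have hdfeas : Aᵀ.mulVec ystar = c := by
    funext j
    have h1 : Tendsto (fun k => Aᵀ.mulVec (y k) j) atTop (nhds (Aᵀ.mulVec ystar j)) := by
      simp only [mulVec, dotProduct]
      exact tendsto_finset_sum _ fun i _ => tendsto_const_nhds.mul (hyi i)
    have h2 : ∀ k, Aᵀ.mulVec (y k) j = c j := fun k => congrFun (hcp k).2.1 j
    exact tendsto_nhds_unique h1 (by simp only [h2]; exact tendsto_const_nhds)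
  have hsnn : ∀ i, 0 ≤ sstar i := fun i =>
    ge_of_tendsto' (hsi i) (fun k => ((hcp k).2.2.2.1 i).le)
  have hynn : ∀ i, 0 ≤ ystar i := fun i =>
    ge_of_tendsto' (hyi i) (fun k => ((hcp k).2.2.2.2 i).le)
  have hsy : sstar ⬝ᵥ ystar = 0 := by
    have h1 : Tendsto (fun k => s k ⬝ᵥ y k) atTop (nhds (sstar ⬝ᵥ ystar)) := by
      simp only [dotProduct]
      exact tendsto_finset_sum _ fun i _ => (hsi i).mul (hyi i)
    have h2 : Tendsto (fun k => s k ⬝ᵥ y k) atTop (nhds 0) := by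
      have heq : ∀ k, s k ⬝ᵥ y k = (m : ℝ) * μ k := by
        intro k
        simp [dotProduct, fun i => (hcp k).2.2.1 i, Finset.sum_const, mul_comm]
      simp only [heq]
      simpa using hμ.const_mul (m : ℝ)
    exact tendsto_nhds_unique h1 h2
  have key : ∀ v : Fin n → ℝ, c ⬝ᵥ v = ystar ⬝ᵥ A.mulVec v := by
    intro v
    rw [← hdfeas, mulVec_transpose, ← dotProduct_mulVec]
  have hcxstar : c ⬝ᵥ xstar = ystar ⬝ᵥ b := by
    rw [key, ← hfeas, dotProduct_add, dotProduct_comm ystar sstar, hsy, add_zero]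
  refine ⟨hfeas, hdfeas, hsnn, hynn, hsy, ?_, ?_⟩
  · intro x' s' hfeas' hs'
    have h3 : c ⬝ᵥ x' = ystar ⬝ᵥ b - ystar ⬝ᵥ s' := by
      rw [key, ← hfeas', dotProduct_add]; ring
    rw [h3, hcxstar]
    have h4 : 0 ≤ ystar ⬝ᵥ s' :=
      Finset.sum_nonneg fun i _ => mul_nonneg (hynn i) (hs' i)
    linarith
  · intro y' hy' hdy'
    have h1 : b ⬝ᵥ y' = c ⬝ᵥ xstar + sstar ⬝ᵥ y' := by
      rw [← hfeas, add_dotProduct, ← hdy', mulVec_transpose, ← dotProduct_mulVec,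
        dotProduct_comm]
    have h2 : b ⬝ᵥ ystar = c ⬝ᵥ xstar := by
      rw [hcxstar, dotProduct_comm]
    have h5 : 0 ≤ sstar ⬝ᵥ y' :=
      Finset.sum_nonneg fun i _ => mul_nonneg (hsnn i) (hy' i)
    rw [h1, h2]; linarith
end

section
/- Let A be an m×n real matrix, b ∈ ℝ^m, c ∈ ℝ^n. Let μ^k > 0 be a sequence with μ^k → 0, and let (x^k, s^k, y^k) satisfy the central path conditions with parameter μ^k for each k. Suppose (x^k, s^k, y^k) → (x*, s*, y*). Then for every index i ∈ {1, …, m}, s*_i · y*_i = 0 and s*_i + y*_i > 0; that is, the support sets σ(s*) = {i : s*_i ≠ 0} and σ(y*) = {i : y*_i ≠ 0} partition {1, …, m}, so the limit is a strictly complementary optimal solution. -/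
open Matrix Filter

/-- As `μ ↓ 0`, any limit of central path points is strictly complementary:
    for each index `i`, `s*_i y*_i = 0` and `s*_i + y*_i > 0`, so the support
    sets of `s*` and `y*` partition the index set. -/
theorem centralPath_limit_strictlyComplementary {m n : ℕ}
    (A : Matrix (Fin m) (Fin n) ℝ) (b : Fin m → ℝ) (c : Fin n → ℝ)
    (μ : ℕ → ℝ) (hμpos : ∀ k, 0 < μ k) (hμ : Tendsto μ atTop (nhds 0))
    (x : ℕ → Fin n → ℝ) (s y : ℕ → Fin m → ℝ)
    (hcp : ∀ k, CentralPath A b c (μ k) (x k) (s k) (y k))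
    (xstar : Fin n → ℝ) (sstar ystar : Fin m → ℝ)
    (hlim : Tendsto (fun k => (x k, s k, y k)) atTop (nhds (xstar, sstar, ystar))) :
    ∀ i, sstar i * ystar i = 0 ∧ 0 < sstar i + ystar i := by
  classical
  have hx : Tendsto x atTop (nhds xstar) := (continuous_fst.tendsto _).comp hlim
  have hsy : Tendsto (fun k => (s k, y k)) atTop (nhds (sstar, ystar)) :=
    (continuous_snd.tendsto _).comp hlim
  have hs : Tendsto s atTop (nhds sstar) := (continuous_fst.tendsto _).comp hsy
  have hy : Tendsto y atTop (nhds ystar) := (continuous_snd.tendsto _).comp hsy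
  have hsi : ∀ i, Tendsto (fun k => s k i) atTop (nhds (sstar i)) :=
    fun i => (tendsto_pi_nhds.mp hs) i
  have hyi : ∀ i, Tendsto (fun k => y k i) atTop (nhds (ystar i)) :=
    fun i => (tendsto_pi_nhds.mp hy) i
  have hsnn : ∀ i, 0 ≤ sstar i :=
    fun i => ge_of_tendsto' (hsi i) fun k => ((hcp k).2.2.2.1 i).le
  have hynn : ∀ i, 0 ≤ ystar i :=
    fun i => ge_of_tendsto' (hyi i) fun k => ((hcp k).2.2.2.2 i).le
  -- complementarity in the limit
  have hcomp : ∀ i, sstar i * ystar i = 0 := fun i =>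
    tendsto_nhds_unique ((hsi i).mul (hyi i))
      (hμ.congr fun k => ((hcp k).2.2.1 i).symm)
  -- feasibility of the limit
  have hAcont : Continuous fun v : Fin n → ℝ => A.mulVec v :=
    A.mulVecLin.continuous_of_finiteDimensional
  have hATcont : Continuous fun v : Fin m → ℝ => Aᵀ.mulVec v :=
    Aᵀ.mulVecLin.continuous_of_finiteDimensional
  have hfeas : A.mulVec xstar + sstar = b :=
    tendsto_nhds_unique (((hAcont.tendsto _).comp hx).add hs)
      (tendsto_const_nhds.congr fun k => ((hcp k).1).symm)
  have hdual : Aᵀ.mulVec ystar = c :=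
    tendsto_nhds_unique ((hATcont.tendsto _).comp hy)
      (tendsto_const_nhds.congr fun k => ((hcp k).2.1).symm)
  -- orthogonality of the residuals
  have horth : ∀ k, ∑ i, (s k i - sstar i) * (y k i - ystar i) = 0 := by
    intro k
    have h1 : (fun i => s k i - sstar i) = A.mulVec (xstar - x k) := by
      funext i
      have hb := (hcp k).1
      have hb' := hfeas
      have : A.mulVec (x k) i + s k i = A.mulVec xstar i + sstar i := by
        rw [show A.mulVec (x k) i + s k i = (A.mulVec (x k) + s k) i from rfl, hb,
          show A.mulVec xstar i + sstar i = (A.mulVec xstar + sstar) i from rfl, hb']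
      rw [Matrix.mulVec_sub]
      simp only [Pi.sub_apply]
      linarith
    have h2 : Aᵀ.mulVec (fun i => y k i - ystar i) = 0 := by
      have : (fun i => y k i - ystar i) = y k - ystar := rfl
      rw [this, Matrix.mulVec_sub, (hcp k).2.1, hdual, sub_self]
    calc ∑ i, (s k i - sstar i) * (y k i - ystar i)
        = A.mulVec (xstar - x k) ⬝ᵥ (fun i => y k i - ystar i) := by
          rw [← h1]; rfl
      _ = (xstar - x k) ⬝ᵥ Aᵀ.mulVec (fun i => y k i - ystar i) := by
          rw [dotProduct_comm, Matrix.dotProduct_mulVec,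
            ← Matrix.mulVec_transpose, dotProduct_comm]
      _ = 0 := by rw [h2]; simp
  -- divide by μ k
  have key2 : ∀ k, ∑ i, (ystar i / y k i + sstar i / s k i) = (m : ℝ) := by
    intro k
    obtain ⟨-, -, hμk, hspos, hypos⟩ := hcp k
    have hterm : ∀ i, (s k i - sstar i) * (y k i - ystar i)
        = μ k - μ k * (ystar i / y k i + sstar i / s k i) + sstar i * ystar i := by
      intro i
      have hy' : y k i ≠ 0 := (hypos i).ne'
      have hs' : s k i ≠ 0 := (hspos i).ne'
      rw [← hμk i]
      field_simp
      ring
    have hsum0 : ∑ i : Fin m,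
        (μ k - μ k * (ystar i / y k i + sstar i / s k i) + sstar i * ystar i) = 0 := by
      calc ∑ i : Fin m, (μ k - μ k * (ystar i / y k i + sstar i / s k i) + sstar i * ystar i)
          = ∑ i, (s k i - sstar i) * (y k i - ystar i) :=
            Finset.sum_congr rfl fun i _ => (hterm i).symm
        _ = 0 := horth k
    rw [Finset.sum_add_distrib, Finset.sum_sub_distrib, ← Finset.mul_sum] at hsum0
    simp only [hcomp, Finset.sum_const_zero, add_zero, Finset.sum_const,
      Finset.card_univ, Fintype.card_fin, nsmul_eq_mul] at hsum0
    have hμne : μ k ≠ 0 := (hμpos k).ne'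
    have : μ k * ∑ i, (ystar i / y k i + sstar i / s k i) = μ k * (m : ℝ) := by
      linarith [hsum0]
    exact mul_left_cancel₀ hμne this
  -- the limit of the normalized sum
  set t : Fin m → ℝ :=
    fun i => (if ystar i ≠ 0 then (1:ℝ) else 0) + (if sstar i ≠ 0 then (1:ℝ) else 0) with ht
  have hlimsum : Tendsto (fun k => ∑ i, (ystar i / y k i + sstar i / s k i)) atTop
      (nhds (∑ i, t i)) := by
    apply tendsto_finset_sum
    intro i _
    apply Tendsto.add
    · rcases eq_or_ne (ystar i) 0 with h | h
      · simp [ht, h]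
      · have h1 : Tendsto (fun k => ystar i / y k i) atTop (nhds (ystar i / ystar i)) :=
          tendsto_const_nhds.div (hyi i) h
        rw [div_self h] at h1
        simpa [ht, h] using h1
    · rcases eq_or_ne (sstar i) 0 with h | h
      · simp [ht, h]
      · have h1 : Tendsto (fun k => sstar i / s k i) atTop (nhds (sstar i / sstar i)) :=
          tendsto_const_nhds.div (hsi i) h
        rw [div_self h] at h1
        simpa [ht, h] using h1
  have hsum_eq : ∑ i, t i = (m : ℝ) :=
    tendsto_nhds_unique hlimsum (tendsto_const_nhds.congr fun k => (key2 k).symm)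
  have ht1 : ∀ j, t j ≤ 1 := by
    intro j
    rcases eq_or_ne (ystar j) 0 with h1 | h1
    · rcases eq_or_ne (sstar j) 0 with h2 | h2 <;> simp [ht, h1, h2]
    · have h2 : sstar j = 0 := by
        rcases mul_eq_zero.mp (hcomp j) with h | h
        · exact h
        · exact absurd h h1
      simp [ht, h1, h2]
  intro i
  refine ⟨hcomp i, ?_⟩
  by_contra hcon
  push_neg at hcon
  have hs0 : sstar i = 0 := le_antisymm (by linarith [hynn i]) (hsnn i)
  have hy0 : ystar i = 0 := le_antisymm (by linarith [hsnn i]) (hynn i)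
  have hlt : ∑ j, t j < ∑ _j : Fin m, (1:ℝ) :=
    Finset.sum_lt_sum (fun j _ => ht1 j)
      ⟨i, Finset.mem_univ i, by simp [ht, hs0, hy0]⟩
  rw [Finset.sum_const, Finset.card_univ, Fintype.card_fin, nsmul_eq_mul, mul_one,
    hsum_eq] at hlt
  exact lt_irrefl _ hlt
end

section
/- Let A be an m×n real matrix, b ∈ ℝ^m, c ∈ ℝ^n. Let μ^k > 0 be a sequence with μ^k → 0, and let (x^k, s^k, y^k) satisfy the central path conditions with parameter μ^k for each k. Suppose (x^k, s^k, y^k) → (x*, s*, y*). Then for every (x̄, s̄) with A x̄ + s̄ = b, s̄ ≥ 0 componentwise, and s̄·y* = 0, one has ∏_{i : s*_i > 0} s̄_i ≤ ∏_{i : s*_i > 0} s*_i; that is, among all optimal slacks, s* maximizes the product of its positive components. -/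
open Matrix Filter Finset

lemma amgm_prod_le_one {ι : Type*} (B : Finset ι) (t : ι → ℝ)
    (ht : ∀ i ∈ B, 0 ≤ t i) (hsum : ∑ i ∈ B, t i ≤ (B.card : ℝ)) :
    ∏ i ∈ B, t i ≤ 1 := by
  rcases B.eq_empty_or_nonempty with h | h
  · simp [h]
  have hN : (0 : ℝ) < (B.card : ℝ) := by exact_mod_cast Finset.card_pos.mpr h
  have hgm := Real.geom_mean_le_arith_mean_weighted B (fun _ => (B.card : ℝ)⁻¹) t
    (fun i _ => by positivity)
    (by rw [Finset.sum_const, nsmul_eq_mul]; field_simp) ht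
  have hle1 : ∏ i ∈ B, t i ^ ((B.card : ℝ)⁻¹) ≤ 1 := by
    refine hgm.trans ?_
    rw [← Finset.mul_sum, inv_mul_le_iff₀ hN]
    simpa using hsum
  have hnn : 0 ≤ ∏ i ∈ B, t i ^ ((B.card : ℝ)⁻¹) :=
    Finset.prod_nonneg fun i hi => Real.rpow_nonneg (ht i hi) _
  calc ∏ i ∈ B, t i = (∏ i ∈ B, t i ^ ((B.card : ℝ)⁻¹)) ^ B.card := by
        rw [← Finset.prod_pow]
        refine Finset.prod_congr rfl fun i hi => ?_
        rw [← Real.rpow_natCast (t i ^ ((B.card : ℝ)⁻¹)) B.card,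
          ← Real.rpow_mul (ht i hi), inv_mul_cancel₀ (ne_of_gt hN), Real.rpow_one]
    _ ≤ 1 := pow_le_one₀ hnn hle1

/-- As `μ ↓ 0`, the limit `(x*, s*)` of central path points maximizes the
    product of the positive slack components among all optimal slacks. -/
theorem centralPath_limit_analyticCenter_of_optimalFace {m n : ℕ}
    (A : Matrix (Fin m) (Fin n) ℝ) (b : Fin m → ℝ) (c : Fin n → ℝ)
    (μ : ℕ → ℝ) (hμpos : ∀ k, 0 < μ k) (hμ : Tendsto μ atTop (nhds 0))
    (x : ℕ → Fin n → ℝ) (s y : ℕ → Fin m → ℝ)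
    (hcp : ∀ k, CentralPath A b c (μ k) (x k) (s k) (y k))
    (xstar : Fin n → ℝ) (sstar ystar : Fin m → ℝ)
    (hlim : Tendsto (fun k => (x k, s k, y k)) atTop (nhds (xstar, sstar, ystar))) :
    ∀ (xbar : Fin n → ℝ) (sbar : Fin m → ℝ),
      A.mulVec xbar + sbar = b → (∀ i, 0 ≤ sbar i) → sbar ⬝ᵥ ystar = 0 →
      ∏ i ∈ Finset.univ.filter (fun i => 0 < sstar i), sbar i ≤
        ∏ i ∈ Finset.univ.filter (fun i => 0 < sstar i), sstar i := by
  simp only [CentralPath] at hcp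
  intro xbar sbar hfeas hsbar hcompl
  have hx : Tendsto x atTop (nhds xstar) :=
    (Continuous.tendsto continuous_fst _).comp hlim
  have hs : Tendsto s atTop (nhds sstar) :=
    (Continuous.tendsto (continuous_fst.comp continuous_snd) _).comp hlim
  have hy : Tendsto y atTop (nhds ystar) :=
    (Continuous.tendsto (continuous_snd.comp continuous_snd) _).comp hlim
  have hsi : ∀ i, Tendsto (fun k => s k i) atTop (nhds (sstar i)) :=
    fun i => tendsto_pi_nhds.mp hs i
  have hyi : ∀ i, Tendsto (fun k => y k i) atTop (nhds (ystar i)) :=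
    fun i => tendsto_pi_nhds.mp hy i
  have hsnn : ∀ i, 0 ≤ sstar i := fun i =>
    ge_of_tendsto' (hsi i) (fun k => ((hcp k).2.2.2.1 i).le)
  have hynn : ∀ i, 0 ≤ ystar i := fun i =>
    ge_of_tendsto' (hyi i) (fun k => ((hcp k).2.2.2.2 i).le)
  have hsy0 : ∀ i, sstar i * ystar i = 0 := by
    intro i
    have h1 : Tendsto (fun k => s k i * y k i) atTop (nhds (sstar i * ystar i)) :=
      (hsi i).mul (hyi i)
    have h2 : Tendsto (fun k => s k i * y k i) atTop (nhds 0) := by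
      simpa only [(funext fun k => (hcp k).2.2.1 i : (fun k => s k i * y k i) = μ)] using hμ
    exact tendsto_nhds_unique h1 h2
  have hcont : Continuous fun v : Fin m → ℝ => Aᵀ.mulVec v := by
    refine continuous_pi fun i => ?_
    simp only [Matrix.mulVec, dotProduct]
    exact continuous_finset_sum _ fun j _ => (continuous_const.mul (continuous_apply j))
  have hdual : Aᵀ.mulVec ystar = c := by
    have h1 : Tendsto (fun k => Aᵀ.mulVec (y k)) atTop (nhds (Aᵀ.mulVec ystar)) :=
      (hcont.tendsto _).comp hy
    have h2 : Tendsto (fun k => Aᵀ.mulVec (y k)) atTop (nhds c) := by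
      simpa only [funext fun k => (hcp k).2.1] using tendsto_const_nhds
    exact tendsto_nhds_unique h1 h2
  have hcontA : Continuous fun v : Fin n → ℝ => A.mulVec v := by
    refine continuous_pi fun i => ?_
    simp only [Matrix.mulVec, dotProduct]
    exact continuous_finset_sum _ fun j _ => (continuous_const.mul (continuous_apply j))
  have hprimal : A.mulVec xstar + sstar = b := by
    have h1 : Tendsto (fun k => A.mulVec (x k) + s k) atTop
        (nhds (A.mulVec xstar + sstar)) := ((hcontA.tendsto _).comp hx).add hs
    have h2 : Tendsto (fun k => A.mulVec (x k) + s k) atTop (nhds b) := by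
      simpa only [funext fun k => (hcp k).1] using tendsto_const_nhds
    exact tendsto_nhds_unique h1 h2
  -- key identity
  have key : ∀ (xb : Fin n → ℝ) (sb : Fin m → ℝ), A.mulVec xb + sb = b →
      sb ⬝ᵥ ystar = 0 →
      ∀ k, ∑ i, (ystar i / y k i + sb i / s k i) = (m : ℝ) := by
    intro xb sb hfb h0 k
    have hsdiff : s k - sb = A.mulVec (xb - x k) := by
      rw [Matrix.mulVec_sub]
      funext i
      have h1 : A.mulVec (x k) i + s k i = b i := congrFun (hcp k).1 i
      have h2 : A.mulVec xb i + sb i = b i := congrFun hfb i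
      simp only [Pi.sub_apply]
      linarith
    have hydiff : Aᵀ.mulVec (y k - ystar) = 0 := by
      rw [Matrix.mulVec_sub, (hcp k).2.1, hdual, sub_self]
    have horth : (s k - sb) ⬝ᵥ (y k - ystar) = 0 := by
      rw [hsdiff, dotProduct_comm, Matrix.dotProduct_mulVec,
        ← Matrix.mulVec_transpose, hydiff, zero_dotProduct]
    have hμsum : ∑ i, s k i * y k i = (m : ℝ) * μ k := by
      simp [(hcp k).2.2.1, Finset.sum_const, Finset.card_univ, mul_comm]
    have hexp : ∑ i, (s k i * ystar i + sb i * y k i) = (m : ℝ) * μ k := by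
      have h1 : ∑ i, (s k i - sb i) * (y k i - ystar i)
          = ∑ i, s k i * y k i - ∑ i, (s k i * ystar i + sb i * y k i)
            + ∑ i, sb i * ystar i := by
        rw [← Finset.sum_sub_distrib, ← Finset.sum_add_distrib]
        exact Finset.sum_congr rfl fun i _ => by ring
      simp only [dotProduct, Pi.sub_apply] at horth h0
      rw [horth, h0, add_zero] at h1
      linarith [hμsum, h1]
    have hterm : ∀ i, ystar i / y k i + sb i / s k i
        = (s k i * ystar i + sb i * y k i) / μ k := by
      intro i
      have hsp := (hcp k).2.2.2.1 i
      have hyp := (hcp k).2.2.2.2 i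
      have hμk : s k i * y k i = μ k := (hcp k).2.2.1 i
      rw [← hμk, add_div]
      rw [mul_div_mul_left _ _ (ne_of_gt hsp), mul_div_mul_right _ _ (ne_of_gt hyp)]
    calc ∑ i, (ystar i / y k i + sb i / s k i)
        = ∑ i, (s k i * ystar i + sb i * y k i) / μ k :=
          Finset.sum_congr rfl fun i _ => hterm i
      _ = (∑ i, (s k i * ystar i + sb i * y k i)) / μ k := by rw [Finset.sum_div]
      _ = ((m : ℝ) * μ k) / μ k := by rw [hexp]
      _ = (m : ℝ) := mul_div_cancel_right₀ _ (ne_of_gt (hμpos k))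
    -- strict complementarity of the limit
  have hstrict : ∀ i, ¬ 0 < sstar i → 0 < ystar i := by
    intro i0 hi0
    by_contra hy0
    have hys0 : ystar i0 = 0 := le_antisymm (not_lt.mp hy0) (hynn i0)
    have hss0 : sstar i0 = 0 := le_antisymm (not_lt.mp hi0) (hsnn i0)
    have hsc : sstar ⬝ᵥ ystar = 0 := by
      simp only [dotProduct]
      exact Finset.sum_eq_zero fun i _ => hsy0 i
    have hid := key xstar sstar hprimal hsc
    set g : Fin m → ℝ := fun i => if 0 < sstar i ∨ 0 < ystar i then 1 else 0 with hg
    have hgl : ∀ i, Tendsto (fun k => ystar i / y k i + sstar i / s k i)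
        atTop (nhds (g i)) := by
      intro i
      by_cases h : 0 < sstar i
      · have hy0' : ystar i = 0 := by
          rcases mul_eq_zero.mp (hsy0 i) with h' | h'
          · exact absurd h' (ne_of_gt h)
          · exact h'
        have ht : Tendsto (fun k => sstar i / s k i) atTop (nhds (sstar i / sstar i)) :=
          tendsto_const_nhds.div (hsi i) (ne_of_gt h)
        have : g i = 1 := by simp [hg, h]
        rw [this]
        simpa [hy0', div_self (ne_of_gt h)] using ht
      · have hs0' : sstar i = 0 := le_antisymm (not_lt.mp h) (hsnn i)
        by_cases h2 : 0 < ystar i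
        · have ht : Tendsto (fun k => ystar i / y k i) atTop (nhds (ystar i / ystar i)) :=
            tendsto_const_nhds.div (hyi i) (ne_of_gt h2)
          have : g i = 1 := by simp [hg, h2]
          rw [this]
          simpa [hs0', div_self (ne_of_gt h2)] using ht
        · have hy0' : ystar i = 0 := le_antisymm (not_lt.mp h2) (hynn i)
          have : g i = 0 := by simp [hg, h, h2]
          rw [this]
          simpa [hs0', hy0'] using (tendsto_const_nhds : Tendsto (fun _ : ℕ => (0:ℝ)) atTop (nhds 0))
    have hsum_t : Tendsto (fun k => ∑ i, (ystar i / y k i + sstar i / s k i))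
        atTop (nhds (∑ i, g i)) := tendsto_finset_sum _ fun i _ => hgl i
    have hsum_c : Tendsto (fun k => ∑ i, (ystar i / y k i + sstar i / s k i))
        atTop (nhds (m : ℝ)) := by
      simpa only [funext hid] using (tendsto_const_nhds : Tendsto (fun _ : ℕ => (m:ℝ)) atTop _)
    have hgm : ∑ i, g i = (m : ℝ) := tendsto_nhds_unique hsum_t hsum_c
    have hgi0 : g i0 = 0 := by simp [hg, hi0, hy0]
    have hsum_le : ∑ i ∈ Finset.univ.erase i0, g i ≤ ((Finset.univ.erase i0).card : ℝ) := by
      have h := Finset.sum_le_card_nsmul (Finset.univ.erase i0) g 1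
        (fun i _ => by by_cases h : 0 < sstar i ∨ 0 < ystar i <;> simp [hg, h])
      rw [nsmul_eq_mul, mul_one] at h
      exact h
    have hcard : (Finset.univ.erase i0).card = m - 1 := by
      simp [Finset.card_erase_of_mem]
    have hm1 : 1 ≤ m := i0.pos
    have : (m : ℝ) = ∑ i ∈ Finset.univ.erase i0, g i := by
      rw [← hgm, ← Finset.add_sum_erase _ g (Finset.mem_univ i0), hgi0, zero_add]
    rw [hcard] at hsum_le
    have : (m : ℝ) ≤ ((m - 1 : ℕ) : ℝ) := this ▸ hsum_le
    rw [Nat.cast_sub hm1] at this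
    norm_num at this
  -- the main estimate
  set B := Finset.univ.filter (fun i => 0 < sstar i) with hB
  set Bc := Finset.univ.filter (fun i => ¬ 0 < sstar i) with hBc
  have hid2 := key xbar sbar hfeas hcompl
  have hperk : ∀ k, ∑ i ∈ B, sbar i / s k i
      ≤ (m : ℝ) - ∑ i ∈ Bc, ystar i / y k i := by
    intro k
    have h12 : (∑ i ∈ B, (ystar i / y k i + sbar i / s k i))
        + (∑ i ∈ Bc, (ystar i / y k i + sbar i / s k i)) = (m : ℝ) := by
      rw [hB, hBc, Finset.sum_filter_add_sum_filter_not]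
      exact hid2 k
    have hA : ∑ i ∈ B, sbar i / s k i ≤ ∑ i ∈ B, (ystar i / y k i + sbar i / s k i) :=
      Finset.sum_le_sum fun i _ => by
        have := div_nonneg (hynn i) ((hcp k).2.2.2.2 i).le
        linarith
    have hC : ∑ i ∈ Bc, ystar i / y k i ≤ ∑ i ∈ Bc, (ystar i / y k i + sbar i / s k i) :=
      Finset.sum_le_sum fun i _ => by
        have := div_nonneg (hsbar i) ((hcp k).2.2.2.1 i).le
        linarith
    linarith
  have hL : Tendsto (fun k => ∑ i ∈ B, sbar i / s k i) atTop
      (nhds (∑ i ∈ B, sbar i / sstar i)) :=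
    tendsto_finset_sum _ fun i hi =>
      tendsto_const_nhds.div (hsi i) (ne_of_gt (Finset.mem_filter.mp hi).2)
  have hR : Tendsto (fun k => (m : ℝ) - ∑ i ∈ Bc, ystar i / y k i) atTop
      (nhds ((m : ℝ) - ∑ i ∈ Bc, (1:ℝ))) := by
    refine tendsto_const_nhds.sub (tendsto_finset_sum _ fun i hi => ?_)
    have hyp := hstrict i (Finset.mem_filter.mp hi).2
    have h : Tendsto (fun k => ystar i / y k i) atTop (nhds (ystar i / ystar i)) :=
      tendsto_const_nhds.div (hyi i) (ne_of_gt hyp)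
    simpa [div_self (ne_of_gt hyp)] using h
  have hmain : ∑ i ∈ B, sbar i / sstar i ≤ (m : ℝ) - Bc.card := by
    have := le_of_tendsto_of_tendsto' hL hR hperk
    simpa using this
  have hcards : (B.card : ℝ) = (m : ℝ) - Bc.card := by
    have := Finset.card_filter_add_card_filter_not
      (s := (Finset.univ : Finset (Fin m))) (p := fun i => 0 < sstar i)
    rw [Finset.card_univ, Fintype.card_fin] at this
    rw [hB, hBc]
    push_cast [← this]
    ring
  have hsumB : ∑ i ∈ B, sbar i / sstar i ≤ (B.card : ℝ) := by
    rw [hcards]; exact hmain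
  have hprod := amgm_prod_le_one B (fun i => sbar i / sstar i)
    (fun i hi => div_nonneg (hsbar i) (hsnn i)) hsumB
  have hPpos : 0 ≤ ∏ i ∈ B, sstar i :=
    Finset.prod_nonneg fun i hi => (hsnn i)
  calc ∏ i ∈ B, sbar i = ∏ i ∈ B, (sbar i / sstar i * sstar i) :=
        Finset.prod_congr rfl fun i hi => by
          rw [div_mul_cancel₀ _ (ne_of_gt (Finset.mem_filter.mp hi).2)]
    _ = (∏ i ∈ B, sbar i / sstar i) * ∏ i ∈ B, sstar i := Finset.prod_mul_distrib
    _ ≤ ∏ i ∈ B, sstar i := mul_le_of_le_one_left hPpos hprod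
end

section
/- Let A be an m×n real matrix, b ∈ ℝ^m, c ∈ ℝ^n. Assume the set {x ∈ ℝ^n : A x ≤ b componentwise} is bounded, and assume there exists ȳ ≥ 0 with Aᵀȳ = c. Let μ^k > 0 be a sequence with μ^k → ∞, let (x^k, s^k, y^k) satisfy the central path conditions with parameter μ^k for each k, and suppose (x^k, s^k) → (x^c, s^c). Then for every (x̄, s̄) with A x̄ + s̄ = b and s̄ ≥ 0 componentwise, ∏_{i=1}^m s̄_i ≤ ∏_{i=1}^m s^c_i; that is, (x^c, s^c) maximizes the product of the slacks over the feasible region (it is the analytic center). -/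
open Matrix Filter Bornology

/-- As `μ ↑ ∞`, any limit `(x^c, s^c)` of central path points maximizes the
    product of the slacks over the feasible region: it is the analytic
    center. -/
theorem centralPath_limit_analyticCenter {m n : ℕ}
    (A : Matrix (Fin m) (Fin n) ℝ) (b : Fin m → ℝ) (c : Fin n → ℝ)
    (hfeas : IsBounded {x : Fin n → ℝ | ∀ i, A.mulVec x i ≤ b i})
    (hdual : ∃ ybar : Fin m → ℝ, (∀ i, 0 ≤ ybar i) ∧ Aᵀ.mulVec ybar = c)
    (μ : ℕ → ℝ) (hμpos : ∀ k, 0 < μ k) (hμ : Tendsto μ atTop atTop)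
    (x : ℕ → Fin n → ℝ) (s y : ℕ → Fin m → ℝ)
    (hcp : ∀ k, CentralPath A b c (μ k) (x k) (s k) (y k))
    (xc : Fin n → ℝ) (sc : Fin m → ℝ)
    (hlim : Tendsto (fun k => (x k, s k)) atTop (nhds (xc, sc))) :
    ∀ (xbar : Fin n → ℝ) (sbar : Fin m → ℝ),
      A.mulVec xbar + sbar = b → (∀ i, 0 ≤ sbar i) →
      ∏ i, sbar i ≤ ∏ i, sc i := by
  obtain ⟨ybar, hyb0, hybc⟩ := hdual
  have hslim : Tendsto s atTop (nhds sc) :=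
    (continuous_snd.tendsto _).comp hlim
  have hslimi : ∀ i, Tendsto (fun k => s k i) atTop (nhds (sc i)) := fun i =>
    ((continuous_apply i).tendsto _).comp hslim
  -- key identity
  have key : ∀ (xb : Fin n → ℝ) (sb : Fin m → ℝ), A.mulVec xb + sb = b →
      ∀ k, ∑ i, sb i / s k i = m - (∑ i, ybar i * (s k i - sb i)) / μ k := by
    intro xb sb hfb k
    obtain ⟨hA, hT, hsy, hs, hy⟩ := hcp k
    rw [Matrix.mulVec_transpose] at hT hybc
    have h1 : y k ⬝ᵥ A.mulVec (xb - x k) = ybar ⬝ᵥ A.mulVec (xb - x k) := by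
      rw [Matrix.dotProduct_mulVec, Matrix.dotProduct_mulVec, hT, hybc]
    have h2 : A.mulVec (xb - x k) = s k - sb := by
      rw [Matrix.mulVec_sub]
      funext i
      have e1 : A.mulVec xb i + sb i = b i := congrFun hfb i
      have e2 : A.mulVec (x k) i + s k i = b i := congrFun hA i
      simp only [Pi.sub_apply]
      linarith
    rw [h2] at h1
    simp only [dotProduct, Pi.sub_apply] at h1
    have h3 : ∀ i, y k i * (s k i - sb i) = μ k - μ k * (sb i / s k i) := by
      intro i
      have hyi : y k i = μ k / s k i := by
        rw [eq_div_iff (hs i).ne']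
        rw [mul_comm]; exact hsy i
      rw [hyi]
      field_simp [(hs i).ne']
    rw [Finset.sum_congr rfl (fun i _ => h3 i)] at h1
    rw [Finset.sum_sub_distrib, Finset.sum_const, Finset.card_univ,
      Fintype.card_fin, ← Finset.mul_sum] at h1
    have hμk := (hμpos k).ne'
    rw [nsmul_eq_mul] at h1
    field_simp
    linarith [h1]
  -- limits of the right-hand side
  have hrhs : ∀ sb : Fin m → ℝ,
      Tendsto (fun k => (m : ℝ) - (∑ i, ybar i * (s k i - sb i)) / μ k)
        atTop (nhds m) := by
    intro sb
    have hg : Tendsto (fun k => ∑ i, ybar i * (s k i - sb i)) atTop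
        (nhds (∑ i, ybar i * (sc i - sb i))) := by
      apply tendsto_finset_sum
      intro i _
      exact (((hslimi i).sub_const _).const_mul _)
    have hdiv : Tendsto (fun k => (∑ i, ybar i * (s k i - sb i)) / μ k) atTop
        (nhds 0) := by
      have := hg.mul (tendsto_inv_atTop_zero.comp hμ)
      simpa [div_eq_mul_inv] using this
    simpa using (tendsto_const_nhds (x := (m : ℝ))).sub hdiv
  -- positivity of sc
  have hsc : ∀ i, 0 < sc i := by
    intro i
    obtain ⟨hA0, _, _, hs0, _⟩ := hcp 0
    have hid := key (x 0) (s 0) hA0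
    have hlim0 : Tendsto (fun k => ∑ j, s 0 j / s k j) atTop (nhds m) := by
      simpa [hid] using hrhs (s 0)
    have hev : ∀ᶠ k in atTop, s 0 i / ((m : ℝ) + 1) ≤ s k i := by
      filter_upwards [hlim0.eventually_le_const (by linarith : (m : ℝ) < m + 1)]
        with k hk
      obtain ⟨_, _, _, hsk, _⟩ := hcp k
      have hterm : s 0 i / s k i ≤ (m : ℝ) + 1 := by
        refine le_trans ?_ hk
        exact Finset.single_le_sum
          (fun j _ => div_nonneg (hs0 j).le (hsk j).le) (Finset.mem_univ i)
      rw [div_le_iff₀ (by positivity : (0:ℝ) < (m:ℝ)+1)]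
      rw [div_le_iff₀ (hsk i)] at hterm
      linarith
    have := ge_of_tendsto (hslimi i) hev
    have h0 : 0 < s 0 i / ((m : ℝ) + 1) := div_pos (hs0 i) (by positivity)
    linarith
  -- main argument
  intro xbar sbar hfb hsb0
  have hsum : ∑ i, sbar i / sc i = m := by
    have h1 : Tendsto (fun k => ∑ i, sbar i / s k i) atTop
        (nhds (∑ i, sbar i / sc i)) := by
      apply tendsto_finset_sum
      intro i _
      exact tendsto_const_nhds.div (hslimi i) (hsc i).ne'
    have h2 : Tendsto (fun k => ∑ i, sbar i / s k i) atTop (nhds m) := by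
      simpa [key xbar sbar hfb] using hrhs sbar
    exact tendsto_nhds_unique h1 h2
  have hscprod : 0 < ∏ i, sc i := Finset.prod_pos (fun i _ => hsc i)
  rcases Nat.eq_zero_or_pos m with hm | hm
  · subst hm
    simp
  -- AM-GM
  have hz : ∀ i ∈ Finset.univ, (0:ℝ) ≤ sbar i / sc i :=
    fun i _ => div_nonneg (hsb0 i) (hsc i).le
  have hamgm := Real.geom_mean_le_arith_mean_weighted Finset.univ
    (fun _ => (m : ℝ)⁻¹) (fun i => sbar i / sc i)
    (fun i _ => by positivity)
    (by simp [Finset.card_univ]; field_simp)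
    hz
  have hprod : ∏ i, (sbar i / sc i) ^ ((m : ℝ)⁻¹) =
      (∏ i, sbar i / sc i) ^ ((m : ℝ)⁻¹) :=
    Real.finset_prod_rpow Finset.univ _ (fun i _ => hz i (Finset.mem_univ i)) _
  have hsum2 : ∑ i : Fin m, (m : ℝ)⁻¹ * (sbar i / sc i) = 1 := by
    rw [← Finset.mul_sum, hsum]
    field_simp
  rw [hprod, hsum2] at hamgm
  have hP : (∏ i, sbar i / sc i) ≤ 1 := by
    by_contra hc
    push_neg at hc
    have h1 : (1:ℝ) < (∏ i, sbar i / sc i) ^ ((m : ℝ)⁻¹) := by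
      rw [Real.one_lt_rpow_iff_of_pos (by linarith)]
      left
      constructor
      · exact hc
      · positivity
    linarith
  rw [Finset.prod_div_distrib] at hP
  rw [div_le_one hscprod] at hP
  exact hP
end

section
/- Let b₁ > 0, b₂ > 0, μ > 0, and c = (c₁, c₂, c₃) ∈ ℝ³ with c₁ ≠ 0 and (c₂, c₃) ≠ (0, 0). Let R be the 3×3 rotation matrix with rows (1, 0, 0), (0, c₂/√(c₂²+c₃²), c₃/√(c₂²+c₃²)), (0, −c₃/√(c₂²+c₃²), c₂/√(c₂²+c₃²)). Then for x ∈ ℝ³ the following are equivalent: (i) there exists y ∈ ℝ³ with y > 0 componentwise such that y₁ − y₂ = c₁, 2x₂y₃ = c₂, 2x₃y₃ = c₃, y₁(b₁ − x₁) = μ, y₂(b₁ + x₁) = μ, y₃(b₂² − x₂² − x₃²) = μ, and −b₁ < x₁ < b₁, x₂² + x₃² < b₂² (the central path conditions for the cylinder {x : |x₁| ≤ b₁, x₂² + x₃² ≤ b₂²} with objective c and parameter μ); (ii) the point z = R x satisfies the central path conditions with parameter μ for the box {z : |z₁| ≤ b₁, |z₂| ≤ b₂, |z₃| ≤ b₂}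 with objective R c, i.e., there exist y¹, y² ∈ ℝ³ with y¹ > 0, y² > 0, y¹ − y² = R c, y¹_i(b_i − z_i) = μ and y²_i(b_i + z_i) = μ for i = 1, 2, 3, where (b₁, b₂, b₂) are the box bounds and −b_i < z_i < b_i. -/
open Matrix

set_option maxHeartbeats 2000000

/-- Central paths of the cylinder `{x : |x₁| ≤ b₁, x₂² + x₃² ≤ b₂²}` with
    objective `c` correspond, under the rotation `R`, to central paths of the
    box `{z : |z₁| ≤ b₁, |z₂| ≤ b₂, |z₃| ≤ b₂}` with objective `R c`. -/
theorem cylinder_box_centralPath_equiv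
    (b₁ b₂ μ c₁ c₂ c₃ : ℝ)
    (hb₁ : 0 < b₁) (hb₂ : 0 < b₂) (hμ : 0 < μ)
    (hc₁ : c₁ ≠ 0) (hc : ¬(c₂ = 0 ∧ c₃ = 0))
    (R : Matrix (Fin 3) (Fin 3) ℝ)
    (hR : R = !![1, 0, 0;
                 0, c₂ / Real.sqrt (c₂ ^ 2 + c₃ ^ 2), c₃ / Real.sqrt (c₂ ^ 2 + c₃ ^ 2);
                 0, -c₃ / Real.sqrt (c₂ ^ 2 + c₃ ^ 2), c₂ / Real.sqrt (c₂ ^ 2 + c₃ ^ 2)])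
    (x : Fin 3 → ℝ) :
    -- (i) central path conditions for the cylinder with objective c
    ((∃ y₁ y₂ y₃ : ℝ, 0 < y₁ ∧ 0 < y₂ ∧ 0 < y₃ ∧
        y₁ - y₂ = c₁ ∧ 2 * x 1 * y₃ = c₂ ∧ 2 * x 2 * y₃ = c₃ ∧
        y₁ * (b₁ - x 0) = μ ∧ y₂ * (b₁ + x 0) = μ ∧
        y₃ * (b₂ ^ 2 - (x 1) ^ 2 - (x 2) ^ 2) = μ) ∧
      -b₁ < x 0 ∧ x 0 < b₁ ∧ (x 1) ^ 2 + (x 2) ^ 2 < b₂ ^ 2)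
    ↔
    -- (ii) central path conditions for the box at z = R x with objective R c
    (∃ ya yb : Fin 3 → ℝ, (∀ i, 0 < ya i) ∧ (∀ i, 0 < yb i) ∧
        (∀ i, ya i - yb i = R.mulVec ![c₁, c₂, c₃] i) ∧
        (∀ i, ya i * (![b₁, b₂, b₂] i - R.mulVec x i) = μ) ∧
        (∀ i, yb i * (![b₁, b₂, b₂] i + R.mulVec x i) = μ) ∧
        (∀ i, -(![b₁, b₂, b₂] i) < R.mulVec x i ∧ R.mulVec x i < ![b₁, b₂, b₂] i)) := by
  have hcpos : 0 < c₂ ^ 2 + c₃ ^ 2 := by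
    rcases not_and_or.mp hc with h | h
    · have := pow_two_pos_of_ne_zero h; nlinarith [sq_nonneg c₃]
    · have := pow_two_pos_of_ne_zero h; nlinarith [sq_nonneg c₂]
  set s : ℝ := Real.sqrt (c₂ ^ 2 + c₃ ^ 2) with hs_def
  have hs : 0 < s := Real.sqrt_pos.mpr hcpos
  have hss : s ^ 2 = c₂ ^ 2 + c₃ ^ 2 := Real.sq_sqrt hcpos.le
  have hsne : s ≠ 0 := hs.ne'
  have e0 : R.mulVec x 0 = x 0 := by
    subst hR; simp [Matrix.mulVec, Fin.sum_univ_three, Matrix.vecHead, Matrix.vecTail]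
  have e1 : R.mulVec x 1 = (c₂ * x 1 + c₃ * x 2) / s := by
    subst hR
    simp [Matrix.mulVec, Fin.sum_univ_three, Matrix.vecHead, Matrix.vecTail]
    ring
  have e2 : R.mulVec x 2 = (-c₃ * x 1 + c₂ * x 2) / s := by
    subst hR
    simp [Matrix.mulVec, Fin.sum_univ_three, Matrix.vecHead, Matrix.vecTail]
    ring
  have f0 : R.mulVec ![c₁, c₂, c₃] 0 = c₁ := by
    subst hR; simp [Matrix.mulVec, Fin.sum_univ_three, Matrix.vecHead, Matrix.vecTail]
  have f1 : R.mulVec ![c₁, c₂, c₃] 1 = s := by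
    subst hR
    simp [Matrix.mulVec, Fin.sum_univ_three, Matrix.vecHead, Matrix.vecTail]
    field_simp
    nlinarith [hss]
  have f2 : R.mulVec ![c₁, c₂, c₃] 2 = 0 := by
    subst hR
    simp [Matrix.mulVec, Fin.sum_univ_three, Matrix.vecHead, Matrix.vecTail]
    ring
  set w : ℝ := (c₂ * x 1 + c₃ * x 2) / s with hw_def
  set v : ℝ := (-c₃ * x 1 + c₂ * x 2) / s with hv_def
  have hws : w * s = c₂ * x 1 + c₃ * x 2 := by
    rw [hw_def]; field_simp
  have hvs : v * s = -c₃ * x 1 + c₂ * x 2 := by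
    rw [hv_def]; field_simp
  constructor
  · rintro ⟨⟨y₁, y₂, y₃, hy₁, hy₂, hy₃, h1, h2, h3, h4, h5, h6⟩, hx0a, hx0b, hq⟩
    set q : ℝ := x 1 ^ 2 + x 2 ^ 2 with hq_def
    have hqpos : 0 < q := by
      rcases eq_or_ne (x 1) 0 with h1' | h1'
      · rcases eq_or_ne (x 2) 0 with h2' | h2'
        · exact absurd ⟨by rw [← h2, h1']; ring, by rw [← h3, h2']; ring⟩ hc
        · have := pow_two_pos_of_ne_zero h2'
          rw [hq_def]; nlinarith [sq_nonneg (x 1)]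
      · have := pow_two_pos_of_ne_zero h1'
        rw [hq_def]; nlinarith [sq_nonneg (x 2)]
    have hrs : w * s = 2 * y₃ * q := by
      linear_combination hws - x 1 * h2 - x 2 * h3 - 2 * y₃ * hq_def
    have hs4 : s ^ 2 = 4 * y₃ ^ 2 * q := by
      rw [hss, ← h2, ← h3, hq_def]; ring
    have hwpos : 0 < w := by
      have hws' : 0 < w * s := by rw [hrs]; positivity
      rcases mul_pos_iff.mp hws' with ⟨h, _⟩ | ⟨_, h'⟩
      · exact h
      · linarith
    have hw2 : w ^ 2 = q := by
      have h4q : (0:ℝ) < 4 * y₃ ^ 2 * q := by positivity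
      have h' : w ^ 2 * (4 * y₃ ^ 2 * q) = q * (4 * y₃ ^ 2 * q) := by
        linear_combination (w * s + 2 * y₃ * q) * hrs - w ^ 2 * hs4
      exact mul_right_cancel₀ h4q.ne' h'
    have hwb : w < b₂ := by nlinarith
    have hbw1 : (0:ℝ) < b₂ - w := by linarith
    have hbw2 : (0:ℝ) < b₂ + w := by linarith
    have hz2 : v = 0 := by
      have : v * s = 0 := by
        rw [hvs, ← h2, ← h3]; ring
      rcases mul_eq_zero.mp this with h | h
      · exact h
      · exact absurd h hsne
    have key1 : 2 * w * y₃ = s := by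
      refine mul_right_cancel₀ hsne ?_
      linear_combination 2 * y₃ * hrs - hs4
    have hμ6 : y₃ * (b₂ ^ 2 - q) = μ := by
      rw [hq_def]; linear_combination h6
    refine ⟨![y₁, μ / (b₂ - w), μ / b₂], ![y₂, μ / (b₂ + w), μ / b₂], ?_, ?_, ?_, ?_, ?_, ?_⟩
    · intro i; fin_cases i <;> simp <;> positivity
    · intro i; fin_cases i <;> simp <;> positivity
    · intro i; fin_cases i
      · simp [f0]; linarith
      · simp [f1]
        rw [div_sub_div _ _ hbw1.ne' hbw2.ne',
          div_eq_iff (by positivity : ((b₂ - w) * (b₂ + w)) ≠ 0)]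
        linear_combination (-2 * w) * hμ6 + (b₂ ^ 2 - w ^ 2) * key1 + (2 * w * y₃) * hw2
      · simp [f2]
    · intro i; fin_cases i
      · simp [e0]; linarith [h4]
      · simp [e1]; field_simp
      · simp [e2, hz2]; field_simp
    · intro i; fin_cases i
      · simp [e0]; linarith [h5]
      · simp [e1]; field_simp
      · simp [e2, hz2]; field_simp
    · intro i; fin_cases i
      · simp [e0]; constructor <;> linarith
      · simp [e1]; constructor <;> linarith
      · simp [e2, hz2]; linarith
  · rintro ⟨ya, yb, hya, hyb, hg, hca, hcb, hbnd⟩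
    have g0 : ya 0 - yb 0 = c₁ := by rw [hg 0, f0]
    have g1 : ya 1 - yb 1 = s := by rw [hg 1, f1]
    have g2 : ya 2 - yb 2 = 0 := by rw [hg 2, f2]
    have a0 : ya 0 * (b₁ - x 0) = μ := by simpa [e0] using hca 0
    have b0 : yb 0 * (b₁ + x 0) = μ := by simpa [e0] using hcb 0
    have a1 : ya 1 * (b₂ - w) = μ := by simpa [e1] using hca 1
    have b1 : yb 1 * (b₂ + w) = μ := by simpa [e1] using hcb 1
    have a2 : ya 2 * (b₂ - v) = μ := by simpa [e2] using hca 2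
    have b2 : yb 2 * (b₂ + v) = μ := by simpa [e2] using hcb 2
    have bnd0 : -b₁ < x 0 ∧ x 0 < b₁ := by simpa [e0] using hbnd 0
    have bnd1 : -b₂ < w ∧ w < b₂ := by simpa [e1] using hbnd 1
    have hv0 : v = 0 := by
      have h' : ya 2 * v = 0 := by
        linear_combination (1/2 : ℝ) * b2 - (1/2 : ℝ) * a2 + ((b₂ + v)/2) * g2
      rcases mul_eq_zero.mp h' with h | h
      · exact absurd h (hya 2).ne'
      · exact h
    have hcross : c₂ * x 2 = c₃ * x 1 := by
      have : v * s = 0 := by rw [hv0]; ring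
      rw [hvs] at this; linarith
    have hkey : s * (b₂ ^ 2 - w ^ 2) = 2 * μ * w := by
      linear_combination (b₂ + w) * a1 - (b₂ - w) * b1 - (b₂ ^ 2 - w ^ 2) * g1
    have hbw : 0 < b₂ ^ 2 - w ^ 2 := by nlinarith [bnd1.1, bnd1.2]
    have hwpos : 0 < w := by nlinarith [mul_pos hs hbw]
    have hw2 : w ^ 2 = x 1 ^ 2 + x 2 ^ 2 := by
      have hs2 : (0:ℝ) < s ^ 2 := by positivity
      have h' : w ^ 2 * s ^ 2 = (x 1 ^ 2 + x 2 ^ 2) * s ^ 2 := by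
        linear_combination (w * s + (c₂ * x 1 + c₃ * x 2)) * hws
          - (x 1 ^ 2 + x 2 ^ 2) * hss - (c₂ * x 2 - c₃ * x 1) * hcross
      exact mul_right_cancel₀ hs2.ne' h'
    have hws_pos : 0 < w * s := mul_pos hwpos hs
    refine ⟨⟨ya 0, yb 0, s / (2 * w), hya 0, hyb 0, by positivity, g0, ?_, ?_, a0, b0, ?_⟩,
      bnd0.1, bnd0.2, by nlinarith [bnd1.1, bnd1.2]⟩
    · refine mul_right_cancel₀ hws_pos.ne' ?_
      have e : 2 * x 1 * (s / (2 * w)) * (w * s) = x 1 * s ^ 2 := by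
        field_simp; try ring
      rw [e]
      linear_combination x 1 * hss - c₂ * hws - c₃ * hcross
    · refine mul_right_cancel₀ hws_pos.ne' ?_
      have e : 2 * x 2 * (s / (2 * w)) * (w * s) = x 2 * s ^ 2 := by
        field_simp; try ring
      rw [e]
      linear_combination x 2 * hss - c₃ * hws + c₂ * hcross
    · have h2w : (0:ℝ) < 2 * w := by linarith
      refine mul_right_cancel₀ h2w.ne' ?_
      have e : s / (2 * w) * (b₂ ^ 2 - x 1 ^ 2 - x 2 ^ 2) * (2 * w)
          = s * (b₂ ^ 2 - x 1 ^ 2 - x 2 ^ 2) := by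
        field_simp; try ring
      rw [e]
      linear_combination hkey + s * hw2
end
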